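/- Let ξ and T be positive random variables with lim_{t→∞} P[ξ > t] = 0 = lim_{t→∞} P[T > t] and P[ξ > t] ≤ P[T > t] for every t > 0. Let ξ₁, ξ₂ be independent copies of ξ, let T₁, T₂ be independent copies of T, and let Y be a one-dimensional standard Brownian motion started at 0, independent of all of them. Then for every t > 0, P[η(-ξ₁, ξ₂) > t] ≤ P[η(-T₁, T₂) > t], where η(a, b) = inf{s ≥ 0 : Y_s ∉ (a, b)}. -/

import Mathlib

open MeasureTheory ProbabilityTheory Filter Set
open scoped ENNReal NNReal

noncomputable section

/-- First exit time (valued in `ℝ≥0∞`) of the path `s ↦ Z s ω` from the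
(possibly `ω`-dependent) set `D ω`: the infimum of nonnegative times at which
the path is outside the set (`∞` if the path never leaves). -/
def exitTime {Ω E : Type*} (Z : ℝ → Ω → E) (D : Ω → Set E) (ω : Ω) : ℝ≥0∞ :=
  ⨅ s : {s : ℝ // 0 ≤ s ∧ Z s ω ∉ D ω}, ENNReal.ofReal s.1

/-- `B` is a standard one-dimensional Brownian motion started at `0` under `P`
(in positive time): measurable, starts at 0, continuous paths, independent
increments, Gaussian increments with variance `t - s`. -/
structure IsStdBM1 {Ω : Type*} [MeasurableSpace Ω] (P : Measure Ω) (B : ℝ → Ω → ℝ) : Prop where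
  meas : ∀ t, Measurable (B t)
  start : ∀ ω, B 0 ω = 0
  cont : ∀ ω, Continuous fun t => B t ω
  indep_incr : ∀ (n : ℕ) (t : Fin (n + 1) → ℝ), (∀ i, 0 ≤ t i) → Monotone t →
    iIndepFun
      (fun (i : Fin n) (ω : Ω) => B (t i.succ) ω - B (t i.castSucc) ω) P
  gauss_incr : ∀ s t : ℝ, 0 ≤ s → s ≤ t →
    P.map (fun ω => B t ω - B s ω) = gaussianReal 0 (Real.toNNReal (t - s))

/-- `B` is a standard `n`-dimensional Brownian motion started at `0` under `P`:
the coordinate processes are independent standard one-dimensional Brownian motions. -/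
structure IsStdBM {Ω : Type*} [MeasurableSpace Ω] (n : ℕ) (P : Measure Ω)
    (B : ℝ → Ω → EuclideanSpace ℝ (Fin n)) : Prop where
  coords_indep : iIndepFun
    (fun (i : Fin n) (ω : Ω) => fun t : ℝ => B t ω i) P
  coords_bm : ∀ i : Fin n, IsStdBM1 P fun t ω => B t ω i

/-- Iterated Brownian motion started at `z`, built from the two-sided Brownian motion
determined by `Xp` (positive time) and `Xm` (negative time), time-changed by `Y`:
`Z t ω = z + X (Y t ω) ω`. -/
def IBM {Ω E : Type*} [Add E] (Xp Xm : ℝ → Ω → E) (Y : ℝ → Ω → ℝ) (z : E) :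
    ℝ → Ω → E :=
  fun t ω => z + (if 0 ≤ Y t ω then Xp (Y t ω) ω else Xm (-(Y t ω)) ω)

/-- Brownian-time Brownian motion started at `z`: `Z¹ t ω = z + X (|Y t ω|) ω`. -/
def BTBM {Ω E : Type*} [Add E] (X : ℝ → Ω → E) (Y : ℝ → Ω → ℝ) (z : E) :
    ℝ → Ω → E :=
  fun t ω => z + X (|Y t ω|) ω

/-- The inradius of a set: the supremum of the radii of all balls contained in it. -/
def inradius {E : Type*} [PseudoMetricSpace E] (D : Set E) : ℝ :=
  sSup {r : ℝ | ∃ x, Metric.ball x r ⊆ D}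

/-- The (`ℝ≥0∞`-valued) random time `τ` has probability density `f` under `P`. -/
def HasDensity {Ω : Type*} [MeasurableSpace Ω] (P : Measure Ω) (τ : Ω → ℝ≥0∞)
    (f : ℝ → ℝ) : Prop :=
  (∀ᵐ ω ∂P, τ ω < ⊤) ∧
    P.map (fun ω => (τ ω).toReal) = volume.withDensity fun u => ENNReal.ofReal (f u)

/-!
A continuous path `w` stays in the open interval `(-a, b)` throughout `[0, t]` exactly when
`sup_{[0,t]} (-w) < a` and `sup_{[0,t]} w < b`. Conditioning on the path of `Y`, which is
independent of the endpoints, `P[η(-ξ₁, ξ₂) > t] = E[P[ξ > sup (-Y)] · P[ξ > sup Y]]` with suprema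
over `[0, t]`. Both suprema are nonnegative because `Y 0 = 0`, so the survival comparison
`P[ξ > s] ≤ P[T > s]`, `s ≥ 0`, compares the integrands pointwise.
-/

def clamp (t s : ℝ) : ℝ := max 0 (min t s)

lemma continuous_clamp (t : ℝ) : Continuous (clamp t) :=
  continuous_const.max (continuous_const.min continuous_id)

lemma range_clamp {t : ℝ} (ht : 0 ≤ t) : range (clamp t) = Icc 0 t := by
  ext s
  constructor
  · rintro ⟨s, rfl⟩
    exact ⟨le_max_left _ _, max_le ht (min_le_left _ _)⟩
  · rintro ⟨hs₀, hst⟩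
    exact ⟨s, by simp [clamp, hs₀, hst]⟩

/-- Sampling at the countably many times `clamp t q`, `q : ℚ`, makes this a measurable function of
an arbitrary path; for continuous `w` it is `sup_{[0,t]} w` (`pathSup_eq_sSup_image`). -/
def pathSup (t : ℝ) (w : ℝ → ℝ) : ℝ := ⨆ q : ℚ, w (clamp t q)

lemma measurable_pathSup (t : ℝ) : Measurable (pathSup t) :=
  Measurable.iSup fun _ => measurable_pi_apply _

lemma pathSup_eq_sSup_image {t : ℝ} (ht : 0 ≤ t) {w : ℝ → ℝ} (hw : Continuous w) :
    pathSup t w = sSup (w '' Icc 0 t) :=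
  calc pathSup t w = ⨆ s : range ((↑) : ℚ → ℝ), w (clamp t s) :=
        (iSup_range' (fun s => w (clamp t s)) _).symm
    _ = ⨆ s, w (clamp t s) := Rat.denseRange_cast.ciSup' (hw.comp (continuous_clamp t))
    _ = sSup (w '' Icc 0 t) := by rw [← range_clamp ht, ← range_comp, sSup_range]; rfl

lemma pathSup_lt_iff {t : ℝ} (ht : 0 ≤ t) {w : ℝ → ℝ} (hw : Continuous w) {b : ℝ} :
    pathSup t w < b ↔ ∀ s ∈ Icc 0 t, w s < b := by
  rw [pathSup_eq_sSup_image ht hw]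
  exact isCompact_Icc.sSup_lt_iff_of_continuous (nonempty_Icc.2 ht) hw.continuousOn b

lemma pathSup_nonneg {t : ℝ} (ht : 0 ≤ t) {w : ℝ → ℝ} (hw : Continuous w) (h₀ : w 0 = 0) :
    0 ≤ pathSup t w :=
  not_lt.1 fun h => ((pathSup_lt_iff ht hw).1 h 0 ⟨le_rfl, ht⟩).ne h₀

lemma ofReal_lt_exitTime_iff {Ω E : Type*} [TopologicalSpace E] {Z : ℝ → Ω → E}
    {D : Ω → Set E} {ω : Ω} (hZ : Continuous fun s => Z s ω) (hD : IsOpen (D ω)) {t : ℝ}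
    (ht : 0 ≤ t) :
    ENNReal.ofReal t < exitTime Z D ω ↔ ∀ s ∈ Icc 0 t, Z s ω ∈ D ω := by
  constructor
  · intro h s hs
    by_contra hsD
    exact (h.trans_le (iInf_le_of_le ⟨s, hs.1, hsD⟩ le_rfl)).not_ge (ENNReal.ofReal_le_ofReal hs.2)
  · intro h
    obtain ⟨δ, hδ, hthick⟩ := isCompact_Icc.exists_thickening_subset_open (hD.preimage hZ) h
    have hexit : ∀ s : {s : ℝ // 0 ≤ s ∧ Z s ω ∉ D ω},
        ENNReal.ofReal (t + δ) ≤ ENNReal.ofReal s.1 := by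
      rintro ⟨s, hs₀, hsD⟩
      refine ENNReal.ofReal_le_ofReal (not_lt.1 fun hs => ?_)
      rcases le_total s t with hst | hst
      · exact hsD (h s ⟨hs₀, hst⟩)
      · refine hsD (hthick (Metric.mem_thickening_iff.2 ⟨t, right_mem_Icc.2 ht, ?_⟩))
        rw [Real.dist_eq, abs_of_nonneg (sub_nonneg.2 hst)]
        linarith
    calc ENNReal.ofReal t < ENNReal.ofReal (t + δ) :=
          (ENNReal.ofReal_lt_ofReal_iff (by linarith)).2 (by linarith)
      _ ≤ exitTime Z D ω := le_iInf hexit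

lemma ofReal_lt_exitTime_Ioo_iff {Ω : Type*} {Y : ℝ → Ω → ℝ} {A B : Ω → ℝ} {ω : Ω}
    (hY : Continuous fun s => Y s ω) {t : ℝ} (ht : 0 ≤ t) :
    ENNReal.ofReal t < exitTime Y (fun ω' => Ioo (-(A ω')) (B ω')) ω ↔
      pathSup t (fun s => -Y s ω) < A ω ∧ pathSup t (fun s => Y s ω) < B ω := by
  rw [ofReal_lt_exitTime_iff hY isOpen_Ioo ht, pathSup_lt_iff ht (w := fun s => -Y s ω) hY.neg,
    pathSup_lt_iff ht hY]
  simp only [mem_Ioo, neg_lt, forall₂_and]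

theorem measure_lt_exitTime_Ioo_eq_lintegral {Ω : Type*} [MeasurableSpace Ω] {P : Measure Ω}
    [IsFiniteMeasure P] {Y : ℝ → Ω → ℝ} (hYm : ∀ s, Measurable (Y s))
    (hYc : ∀ ω, Continuous fun s => Y s ω) {A B : Ω → ℝ} (hA : Measurable A) (hB : Measurable B)
    (hind : IndepFun (fun ω => (A ω, B ω)) (fun ω s => Y s ω) P) {t : ℝ} (ht : 0 ≤ t) :
    P {ω | ENNReal.ofReal t < exitTime Y (fun ω' => Ioo (-(A ω')) (B ω')) ω} =
      ∫⁻ ω, P.map (fun ω => (A ω, B ω))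
        (Ioi (pathSup t fun s => -Y s ω) ×ˢ Ioi (pathSup t fun s => Y s ω)) ∂P := by
  have hpath : Measurable fun ω s => Y s ω := measurable_pi_lambda _ hYm
  set S : Set ((ℝ → ℝ) × ℝ × ℝ) := {x | pathSup t (-x.1) < x.2.1 ∧ pathSup t x.1 < x.2.2}
  have hS : MeasurableSet S :=
    (measurableSet_lt ((measurable_pathSup t).comp measurable_fst.neg) measurable_snd.fst).inter
      (measurableSet_lt ((measurable_pathSup t).comp measurable_fst) measurable_snd.snd)
  have hevent : {ω | ENNReal.ofReal t < exitTime Y (fun ω' => Ioo (-(A ω')) (B ω')) ω} =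
      (fun ω => (fun s => Y s ω, A ω, B ω)) ⁻¹' S := by
    ext ω
    exact ofReal_lt_exitTime_Ioo_iff (hYc ω) ht
  rw [hevent, ← Measure.map_apply (hpath.prodMk (hA.prodMk hB)) hS,
    hind.symm.map_prod_eq_prod_map_map hpath.aemeasurable (hA.prodMk hB).aemeasurable,
    Measure.prod_apply hS, lintegral_map (measurable_measure_prodMk_left hS) hpath]
  rfl

lemma map_Ioi_le_map_Ioi {Ω : Type*} [MeasurableSpace Ω] {P : Measure Ω} {ξ T : Ω → ℝ}
    (hξ : Measurable ξ) (hT : Measurable T) (hTpos : ∀ ω, 0 < T ω)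
    (hle : ∀ s : ℝ, 0 < s → P {ω | s < ξ ω} ≤ P {ω | s < T ω}) {s : ℝ} (hs : 0 ≤ s) :
    P.map ξ (Ioi s) ≤ P.map T (Ioi s) := by
  rw [Measure.map_apply hξ measurableSet_Ioi, Measure.map_apply hT measurableSet_Ioi]
  rcases hs.eq_or_lt with rfl | hs
  · rw [show T ⁻¹' Ioi 0 = univ from eq_univ_of_forall hTpos]
    exact measure_mono (subset_univ _)
  · exact hle s hs

theorem exit_random_interval_comparison_general {Ω : Type*} [MeasurableSpace Ω] (P : Measure Ω) [IsProbabilityMeasure P]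
    (Y : ℝ → Ω → ℝ) (hY : IsStdBM1 P Y)
    (ξ T ξ₁ ξ₂ T₁ T₂ : Ω → ℝ)
    (hξm : Measurable ξ) (hTm : Measurable T) (hξ₁m : Measurable ξ₁)
    (hξ₂m : Measurable ξ₂) (hT₁m : Measurable T₁) (hT₂m : Measurable T₂)
    (hTpos : ∀ ω, 0 < T ω)
    (hle : ∀ s : ℝ, 0 < s → P {ω | s < ξ ω} ≤ P {ω | s < T ω})
    (hξ₁d : P.map ξ₁ = P.map ξ) (hξ₂d : P.map ξ₂ = P.map ξ)
    (hT₁d : P.map T₁ = P.map T) (hT₂d : P.map T₂ = P.map T)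
    (hξind : IndepFun ξ₁ ξ₂ P) (hTind : IndepFun T₁ T₂ P)
    (hξY : IndepFun (fun ω => (ξ₁ ω, ξ₂ ω)) (fun ω (s : ℝ) => Y s ω) P)
    (hTY : IndepFun (fun ω => (T₁ ω, T₂ ω)) (fun ω (s : ℝ) => Y s ω) P)
    (t : ℝ) (ht : 0 < t) :
    P {ω | ENNReal.ofReal t < exitTime Y (fun ω' => Set.Ioo (-(ξ₁ ω')) (ξ₂ ω')) ω} ≤
      P {ω | ENNReal.ofReal t < exitTime Y (fun ω' => Set.Ioo (-(T₁ ω')) (T₂ ω')) ω} := by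
  have hlawξ : P.map (fun ω => (ξ₁ ω, ξ₂ ω)) = (P.map ξ).prod (P.map ξ) := by
    rw [hξind.map_prod_eq_prod_map_map hξ₁m.aemeasurable hξ₂m.aemeasurable, hξ₁d, hξ₂d]
  have hlawT : P.map (fun ω => (T₁ ω, T₂ ω)) = (P.map T).prod (P.map T) := by
    rw [hTind.map_prod_eq_prod_map_map hT₁m.aemeasurable hT₂m.aemeasurable, hT₁d, hT₂d]
  have hdom : ∀ s, 0 ≤ s → P.map ξ (Ioi s) ≤ P.map T (Ioi s) :=
    fun _ => map_Ioi_le_map_Ioi hξm hTm hTpos hle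
  rw [measure_lt_exitTime_Ioo_eq_lintegral hY.meas hY.cont hξ₁m hξ₂m hξY ht.le,
    measure_lt_exitTime_Ioo_eq_lintegral hY.meas hY.cont hT₁m hT₂m hTY ht.le, hlawξ, hlawT]
  refine lintegral_mono fun ω => ?_
  rw [Measure.prod_prod, Measure.prod_prod]
  exact mul_le_mul' (hdom _ (pathSup_nonneg ht.le (hY.cont ω).neg (by simp [hY.start ω])))
    (hdom _ (pathSup_nonneg ht.le (hY.cont ω) (hY.start ω)))

/-- If `ξ` and `T` are positive random variables whose survival functions vanish at
infinity and satisfy `P[ξ > s] ≤ P[T > s]` for all `s > 0`, `ξ₁, ξ₂` are independent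
copies of `ξ`, `T₁, T₂` are independent copies of `T`, and `Y` is a standard
one-dimensional Brownian motion independent of them, then for every `t > 0` the exit time
of `Y` from the random interval `(-ξ₁, ξ₂)` is stochastically dominated by the exit time
of `Y` from `(-T₁, T₂)`. -/
theorem exit_random_interval_comparison {Ω : Type*} [MeasurableSpace Ω] (P : Measure Ω) [IsProbabilityMeasure P]
    (Y : ℝ → Ω → ℝ) (hY : IsStdBM1 P Y)
    (ξ T ξ₁ ξ₂ T₁ T₂ : Ω → ℝ)
    (hξm : Measurable ξ) (hTm : Measurable T) (hξ₁m : Measurable ξ₁)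
    (hξ₂m : Measurable ξ₂) (hT₁m : Measurable T₁) (hT₂m : Measurable T₂)
    (hξpos : ∀ ω, 0 < ξ ω) (hTpos : ∀ ω, 0 < T ω)
    (hξlim : Tendsto (fun s : ℝ => P {ω | s < ξ ω}) atTop (nhds 0))
    (hTlim : Tendsto (fun s : ℝ => P {ω | s < T ω}) atTop (nhds 0))
    (hle : ∀ s : ℝ, 0 < s → P {ω | s < ξ ω} ≤ P {ω | s < T ω})
    (hξ₁d : P.map ξ₁ = P.map ξ) (hξ₂d : P.map ξ₂ = P.map ξ)
    (hT₁d : P.map T₁ = P.map T) (hT₂d : P.map T₂ = P.map T)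
    (hξind : IndepFun ξ₁ ξ₂ P) (hTind : IndepFun T₁ T₂ P)
    (hξY : IndepFun (fun ω => (ξ₁ ω, ξ₂ ω)) (fun ω (s : ℝ) => Y s ω) P)
    (hTY : IndepFun (fun ω => (T₁ ω, T₂ ω)) (fun ω (s : ℝ) => Y s ω) P)
    (t : ℝ) (ht : 0 < t) :
    P {ω | ENNReal.ofReal t < exitTime Y (fun ω' => Set.Ioo (-(ξ₁ ω')) (ξ₂ ω')) ω} ≤
      P {ω | ENNReal.ofReal t < exitTime Y (fun ω' => Set.Ioo (-(T₁ ω')) (T₂ ω')) ω} :=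
  exit_random_interval_comparison_general P Y hY ξ T ξ₁ ξ₂ T₁ T₂ hξm hTm hξ₁m hξ₂m hT₁m hT₂m hTpos
    hle hξ₁d hξ₂d hT₁d hT₂d hξind hTind hξY hTY t ht

end
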